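/- arXiv:1107.0104 — 6 statements merged into one kernel-verified Lean document; each statement's English description precedes it below -/
import Mathlib

section
/- Any set P of n = (r-1)(d+1)+1 points in R^d can be partitioned into r sets P1, ..., Pr such that the intersection of the convex hulls ch(P1), ..., ch(Pr) is nonempty. -/
open Finset Module RealInnerProductSpace

/-! Sarkaria's proof. Write `r = m + 1` and lift each point `a` to the `r` vectors `vᵢ ⊗ (a, 1)`
in `ℝᵐ ⊗ (E × ℝ)`, a space of dimension `m (d + 1)`, where `v₀, …, vₘ ∈ ℝᵐ` sum to zero and satisfy
no other linear relation. The lifts of `a` have barycenter `0`, so Bárány's colorful Carathéodory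
theorem, applied to `m (d + 1) + 1` color classes, selects one lift `v_{col a} ⊗ (a, 1)` per point
with `0` in their convex hull. Grouping that convex combination by color gives `∑ᵢ vᵢ ⊗ Fᵢ = 0`
with `Fᵢ = ∑_{col a = i} wₐ • (a, 1)`, so all `Fᵢ` are equal: the color classes carry equal mass and
equal moment, hence share their barycenter.

Colorful Carathéodory: take a colorful hull nearest to `0`. If its point `p` nearest to `0` is not
`0`, then `p` lies in the hull of at most `d` chosen points (those on the supporting hyperplane
`⟪p, ·⟫ = ‖p‖²`), and exchanging a missing color for a point of that color with `⟪p, ·⟫ ≤ 0`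
yields a nearer colorful hull. -/

theorem exists_sum_smul_eq_of_mem_convexHull_range {E ι : Type*} [AddCommGroup E] [Module ℝ E]
    [Fintype ι] {x : ι → E} {p : E} (h : p ∈ convexHull ℝ (Set.range x)) :
    ∃ w : ι → ℝ, (∀ j, 0 ≤ w j) ∧ ∑ j, w j = 1 ∧ ∑ j, w j • x j = p := by
  classical
  rw [convexHull_range_eq_exists_affineCombination] at h
  obtain ⟨s, w, hw₀, hw₁, rfl⟩ := h
  refine ⟨fun j => if j ∈ s then w j else 0, fun j => ?_, ?_, ?_⟩
  · dsimp only
    split_ifs with hj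
    exacts [hw₀ j hj, le_rfl]
  · rw [sum_ite_mem, univ_inter, hw₁]
  · simp_rw [ite_smul, zero_smul]
    rw [sum_ite_mem, univ_inter, s.affineCombination_eq_linear_combination _ _ hw₁]

theorem exists_mem_map_nonpos_of_zero_mem_convexHull {E : Type*} [AddCommGroup E] [Module ℝ E]
    {s : Set E} (h : (0 : E) ∈ convexHull ℝ s) (φ : E →ₗ[ℝ] ℝ) : ∃ y ∈ s, φ y ≤ 0 := by
  by_contra! hs
  have : (0 : ℝ) < φ 0 := convexHull_min hs (convex_halfSpace_gt φ.isLinear 0) h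
  simp at this

section InnerProductSpace

variable {E : Type*} [NormedAddCommGroup E] [InnerProductSpace ℝ E]

theorem exists_mem_segment_norm_lt {p y : E} (h : ⟪p, y - p⟫ < 0) :
    ∃ z ∈ segment ℝ p y, ‖z‖ < ‖p‖ := by
  have hyp : 0 < ‖y - p‖ ^ 2 := by
    have : y - p ≠ 0 := by
      rintro hyp
      simp [hyp] at h
    positivity
  set t := min 1 (-⟪p, y - p⟫ / ‖y - p‖ ^ 2)
  have ht₀ : 0 < t := lt_min one_pos (div_pos (neg_pos.2 h) hyp)
  have ht : t * ‖y - p‖ ^ 2 ≤ -⟪p, y - p⟫ := (le_div_iff₀ hyp).1 (min_le_right _ _)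
  refine ⟨p + t • (y - p), ?_, ?_⟩
  · rw [segment_eq_image']
    exact ⟨t, ⟨ht₀.le, min_le_left _ _⟩, rfl⟩
  · have hsq : ‖p + t • (y - p)‖ ^ 2 = ‖p‖ ^ 2 + 2 * t * ⟪p, y - p⟫ + t * (t * ‖y - p‖ ^ 2) := by
      rw [norm_add_sq_real, real_inner_smul_right, norm_smul, Real.norm_eq_abs, mul_pow, sq_abs]
      ring
    refine lt_of_pow_lt_pow_left₀ 2 (norm_nonneg p) ?_
    nlinarith [mul_le_mul_of_nonneg_left ht ht₀.le]

theorem Convex.inner_sub_nonneg_of_forall_norm_le {K : Set E} (hK : Convex ℝ K) {p y : E}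
    (hp : p ∈ K) (hmin : ∀ z ∈ K, ‖p‖ ≤ ‖z‖) (hy : y ∈ K) : 0 ≤ ⟪p, y - p⟫ := by
  by_contra! h
  obtain ⟨z, hz, hzp⟩ := exists_mem_segment_norm_lt h
  exact hzp.not_ge (hmin z (hK.segment_subset hp hy hz))

theorem AffineIndependent.card_le_finrank_of_forall_inner_eq [FiniteDimensional ℝ E] {ι : Type*}
    [Fintype ι] {z : ι → E} (hz : AffineIndependent ℝ z) {p : E} (hp : p ≠ 0) {c : ℝ}
    (hc : ∀ i, ⟪p, z i⟫ = c) : Fintype.card ι ≤ finrank ℝ E := by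
  have hspan : vectorSpan ℝ (Set.range z) ≤ (ℝ ∙ p)ᗮ := by
    rw [vectorSpan_def, Submodule.span_le]
    rintro _ ⟨_, ⟨i, rfl⟩, _, ⟨j, rfl⟩, rfl⟩
    rw [SetLike.mem_coe, Submodule.mem_orthogonal_singleton_iff_inner_right]
    show ⟪p, z i - z j⟫ = 0
    rw [inner_sub_right, hc, hc, sub_self]
  have hdim := (ℝ ∙ p).finrank_add_finrank_orthogonal
  rw [finrank_span_singleton hp] at hdim
  have := Submodule.finrank_mono hspan
  have := hz.card_le_finrank_succ
  omega

theorem exists_card_le_finrank_mem_convexHull_image [FiniteDimensional ℝ E] {ι : Type*}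
    {x : ι → E} {p : E} (hp : p ≠ 0) (hpx : p ∈ convexHull ℝ (Set.range x))
    (hx : ∀ j, ⟪p, p⟫ ≤ ⟪p, x j⟫) :
    ∃ s : Finset ι, #s ≤ finrank ℝ E ∧ p ∈ convexHull ℝ (x '' s) := by
  classical
  obtain ⟨κ, _, z, w, hzx, hz, hw₀, hw₁, hwp⟩ := eq_pos_convex_span_of_mem_convexHull hpx
  have hzx' : ∀ i, ∃ j, x j = z i := fun i => hzx (Set.mem_range_self i)
  choose j hj using hzx'
  -- Positive weights average the values `⟪p, z i⟫ ≥ ⟪p, p⟫` to `⟪p, p⟫`, so all of them are equal.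
  have hzH : ∀ i, ⟪p, z i⟫ = ⟪p, p⟫ := by
    have hsum : ∑ i, w i * (⟪p, z i⟫ - ⟪p, p⟫) = 0 := by
      simp_rw [mul_sub, sum_sub_distrib, ← sum_mul, hw₁, one_mul, ← real_inner_smul_right,
        ← inner_sum, hwp, sub_self]
    intro i
    have hi := (sum_eq_zero_iff_of_nonneg fun i _ =>
      mul_nonneg (hw₀ i).le (sub_nonneg.2 (hj i ▸ hx (j i)))).1 hsum i (mem_univ i)
    linarith [(mul_eq_zero.1 hi).resolve_left (hw₀ i).ne']
  refine ⟨univ.image j, card_image_le.trans (hz.card_le_finrank_of_forall_inner_eq hp hzH), ?_⟩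
  rw [← hwp]
  refine (convex_convexHull ℝ _).sum_mem (fun i _ => (hw₀ i).le) hw₁ fun i _ => ?_
  exact subset_convexHull ℝ _ ⟨j i, by simp, hj i⟩

theorem InnerProductSpace.exists_colorful_zero_mem_convexHull [FiniteDimensional ℝ E] {ι : Type*}
    [Fintype ι] (hcard : finrank ℝ E < Fintype.card ι) (C : ι → Finset E)
    (hC : ∀ j, (0 : E) ∈ convexHull ℝ (C j : Set E)) :
    ∃ x : ι → E, (∀ j, x j ∈ C j) ∧ (0 : E) ∈ convexHull ℝ (Set.range x) := by
  classical
  have hne : (Fintype.piFinset C).Nonempty := Fintype.piFinset_nonempty.2 fun j =>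
    coe_nonempty.1 (convexHull_nonempty_iff.1 ⟨0, hC j⟩)
  have : Nonempty ι := Fintype.card_pos_iff.1 (by omega)
  obtain ⟨x, hxC, hxmin⟩ :=
    (Fintype.piFinset C).exists_min_image
      (fun x => Metric.infDist 0 (convexHull ℝ (Set.range x))) hne
  refine ⟨x, Fintype.mem_piFinset.1 hxC, ?_⟩
  by_contra h0
  have hK : IsCompact (convexHull ℝ (Set.range x)) := (Set.finite_range x).isCompact_convexHull ℝ
  obtain ⟨p, hpK, hp⟩ :=
    hK.exists_infDist_eq_dist ((convexHull_nonempty_iff (𝕜 := ℝ)).2 (Set.range_nonempty x)) 0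
  have hp0 : p ≠ 0 := by
    rintro rfl
    exact h0 hpK
  have hmin : ∀ x' ∈ Fintype.piFinset C, ∀ z ∈ convexHull ℝ (Set.range x'), ‖p‖ ≤ ‖z‖ := by
    intro x' hx' z hz
    calc ‖p‖ = Metric.infDist 0 (convexHull ℝ (Set.range x)) := by rw [hp, dist_zero_left]
      _ ≤ Metric.infDist 0 (convexHull ℝ (Set.range x')) := hxmin x' hx'
      _ ≤ ‖z‖ := by simpa using Metric.infDist_le_dist_of_mem (x := 0) hz
  have hpx : ∀ j, ⟪p, p⟫ ≤ ⟪p, x j⟫ := fun j => by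
    have := (convex_convexHull ℝ _).inner_sub_nonneg_of_forall_norm_le hpK (hmin x hxC)
      (subset_convexHull ℝ _ (Set.mem_range_self j))
    rwa [inner_sub_right, sub_nonneg] at this
  obtain ⟨s, hs, hps⟩ := exists_card_le_finrank_mem_convexHull_image hp0 hpK hpx
  obtain ⟨k, hk⟩ : ∃ k, k ∉ s := by
    by_contra! h
    exact (hs.trans_lt hcard).not_ge (card_le_card fun k _ => h k)
  obtain ⟨y, hyC, hy⟩ := exists_mem_map_nonpos_of_zero_mem_convexHull (hC k) (innerₛₗ ℝ p)
  set x' := Function.update x k y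
  have hx' : x' ∈ Fintype.piFinset C := Fintype.mem_piFinset.2 fun j => by
    rcases eq_or_ne j k with rfl | hjk
    · simpa [x'] using hyC
    · simpa [x', hjk] using Fintype.mem_piFinset.1 hxC j
  have hpK' : p ∈ convexHull ℝ (Set.range x') := by
    refine convexHull_mono ?_ hps
    rintro _ ⟨j, hj, rfl⟩
    exact ⟨j, Function.update_of_ne (ne_of_mem_of_not_mem hj hk) _ _⟩
  have hyK' : y ∈ convexHull ℝ (Set.range x') := subset_convexHull ℝ _ ⟨k, by simp [x']⟩
  have := (convex_convexHull ℝ _).inner_sub_nonneg_of_forall_norm_le hpK' (hmin x' hx') hyK'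
  rw [inner_sub_right, real_inner_self_eq_norm_sq] at this
  have : 0 < ‖p‖ := norm_pos_iff.2 hp0
  simp only [innerₛₗ_apply_apply] at hy
  nlinarith

end InnerProductSpace

theorem exists_colorful_zero_mem_convexHull {E : Type*} [AddCommGroup E] [Module ℝ E]
    [FiniteDimensional ℝ E] {ι : Type*} [Fintype ι] (hcard : finrank ℝ E < Fintype.card ι)
    (C : ι → Finset E) (hC : ∀ j, (0 : E) ∈ convexHull ℝ (C j : Set E)) :
    ∃ x : ι → E, (∀ j, x j ∈ C j) ∧ (0 : E) ∈ convexHull ℝ (Set.range x) := by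
  classical
  let e := LinearEquiv.ofFinrankEq E (EuclideanSpace ℝ (Fin (finrank ℝ E)))
    finrank_euclideanSpace_fin.symm
  have hC' : ∀ j, (0 : EuclideanSpace ℝ (Fin (finrank ℝ E))) ∈
      convexHull ℝ ((C j).image e : Set (EuclideanSpace ℝ (Fin (finrank ℝ E)))) := fun j => by
    rw [coe_image, ← e.coe_coe, ← LinearMap.image_convexHull]
    exact ⟨0, hC j, map_zero e⟩
  obtain ⟨x, hxC, hx0⟩ :=
    InnerProductSpace.exists_colorful_zero_mem_convexHull (by simpa using hcard) _ hC'
  refine ⟨fun j => e.symm (x j), fun j => ?_, ?_⟩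
  · obtain ⟨a, ha, hax⟩ := mem_image.1 (hxC j)
    simpa [← hax] using ha
  · rw [Set.range_comp' e.symm x, ← e.symm.coe_coe, ← LinearMap.image_convexHull]
    exact ⟨0, hx0, map_zero e.symm⟩

/-- Sarkaria's vectors `v₀, …, vₘ` in `ℝᵐ`: the standard basis followed by minus the sum of its
vectors. Their only linear relations `∑ cᵢ vᵢ = 0` are those with all `cᵢ` equal. -/
def sarkariaVector (m : ℕ) : Fin (m + 1) → Fin m → ℝ :=
  Fin.lastCases (fun _ => -1) fun i => Pi.single i 1

theorem sum_sarkariaVector_smul {V : Type*} [AddCommGroup V] [Module ℝ V] {m : ℕ}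
    (F : Fin (m + 1) → V) (l : Fin m) :
    ∑ i, sarkariaVector m i l • F i = F l.castSucc - F (Fin.last m) := by
  simp [Fin.sum_univ_castSucc, sarkariaVector, Pi.single_apply, sub_eq_add_neg]

theorem eq_of_forall_sum_sarkariaVector_smul_eq_zero {V : Type*} [AddCommGroup V] [Module ℝ V]
    {m : ℕ} {F : Fin (m + 1) → V} (hF : ∀ l, ∑ i, sarkariaVector m i l • F i = 0)
    (i j : Fin (m + 1)) :
    F i = F j := by
  suffices h : ∀ i, F i = F (Fin.last m) by rw [h i, h j]
  intro i
  induction i using Fin.lastCases with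
  | last => rfl
  | cast l => rw [← sub_eq_zero, ← sum_sarkariaVector_smul, hF]

/-- The tensor product `vᵢ ⊗ (a, 1)` in `ℝᵐ ⊗ (E × ℝ) = (Fin m → E × ℝ)`. -/
def sarkariaLift {E : Type*} [AddCommGroup E] [Module ℝ E] (m : ℕ) (i : Fin (m + 1)) (a : E) :
    Fin m → E × ℝ :=
  fun l => sarkariaVector m i l • (a, 1)

section Sarkaria

variable {E : Type*} [AddCommGroup E] [Module ℝ E] {m : ℕ}

theorem zero_mem_convexHull_range_sarkariaLift (a : E) :
    (0 : Fin m → E × ℝ) ∈ convexHull ℝ (Set.range fun i => sarkariaLift m i a) := by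
  have hsum : ∑ i, sarkariaLift m i a = 0 := funext fun l => by
    simpa [sarkariaLift, sum_smul] using sum_sarkariaVector_smul (fun _ => (a, (1 : ℝ))) l
  have hmem := (convex_convexHull ℝ (Set.range fun i => sarkariaLift m i a)).sum_mem
    (t := univ) (w := fun _ => ((m : ℝ) + 1)⁻¹) (fun _ _ => by positivity)
    (by simp [Nat.cast_add_one_ne_zero]) fun i _ => subset_convexHull ℝ _ (Set.mem_range_self i)
  rwa [← smul_sum, hsum, smul_zero] at hmem

theorem sum_smul_sarkariaLift_apply (P : Finset E) (col : E → Fin (m + 1)) (w : E → ℝ) (l : Fin m) :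
    (∑ a ∈ P, w a • sarkariaLift m (col a) a) l =
      ∑ i, sarkariaVector m i l • ∑ a ∈ P with col a = i, w a • (a, (1 : ℝ)) := by
  simp_rw [smul_sum]
  rw [Finset.sum_apply, ← sum_fiberwise P col]
  refine sum_congr rfl fun i _ => sum_congr rfl fun a ha => ?_
  rw [(mem_filter.1 ha).2, Pi.smul_apply, sarkariaLift, smul_comm]

theorem exists_coloring_sum_smul_sarkariaLift_eq_zero [FiniteDimensional ℝ E] (P : Finset E)
    (hP : m * (finrank ℝ E + 1) < #P) :
    ∃ (col : E → Fin (m + 1)) (w : E → ℝ), (∀ a ∈ P, 0 ≤ w a) ∧ ∑ a ∈ P, w a = 1 ∧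
      ∑ a ∈ P, w a • sarkariaLift m (col a) a = 0 := by
  classical
  have hcard : finrank ℝ (Fin m → E × ℝ) < Fintype.card P := by
    simpa [Module.finrank_pi_fintype, Module.finrank_prod] using hP
  obtain ⟨x, hxC, hx0⟩ := exists_colorful_zero_mem_convexHull hcard
    (fun a => univ.image fun i => sarkariaLift m i a) fun a => by
      simpa using zero_mem_convexHull_range_sarkariaLift (m := m) (a : E)
  choose c hc using fun a => mem_image.1 (hxC a)
  obtain ⟨w, hw₀, hw₁, hw⟩ := exists_sum_smul_eq_of_mem_convexHull_range hx0
  refine ⟨fun a => if h : a ∈ P then c ⟨a, h⟩ else 0, fun a => if h : a ∈ P then w ⟨a, h⟩ else 0,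
    fun a ha => by simp [ha, hw₀], ?_, ?_⟩
  · rw [← sum_coe_sort P, ← hw₁]
    simp
  · rw [← sum_coe_sort P, ← hw]
    simp [hc]

end Sarkaria

theorem exists_mem_convexHull_fibers_of_sum_smul_eq {E ι : Type*} [AddCommGroup E] [Module ℝ E]
    [Fintype ι] [DecidableEq ι] (P : Finset E) (col : E → ι) (w : E → ℝ)
    (hw₀ : ∀ a ∈ P, 0 ≤ w a) (hw₁ : ∑ a ∈ P, w a = 1)
    (hF : ∀ i j, ∑ a ∈ P with col a = i, w a • (a, (1 : ℝ)) =
      ∑ a ∈ P with col a = j, w a • (a, (1 : ℝ))) :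
    (∀ i, {a ∈ P | col a = i}.Nonempty) ∧
      ∃ x, ∀ i, x ∈ convexHull ℝ (({a ∈ P | col a = i} : Finset E) : Set E) := by
  have hmass : ∀ i j, ∑ a ∈ P with col a = i, w a = ∑ a ∈ P with col a = j, w a := fun i j => by
    simpa [Prod.snd_sum] using congrArg Prod.snd (hF i j)
  have hmoment : ∀ i j, ∑ a ∈ P with col a = i, w a • a = ∑ a ∈ P with col a = j, w a • a :=
    fun i j => by simpa [Prod.fst_sum] using congrArg Prod.fst (hF i j)
  have hcard : ∀ i, (Fintype.card ι : ℝ) * ∑ a ∈ P with col a = i, w a = 1 := fun i => by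
    rw [← hw₁, ← sum_fiberwise P col w]
    simp [hmass _ i]
  have hpos : ∀ i, 0 < ∑ a ∈ P with col a = i, w a := fun i =>
    pos_of_mul_pos_right ((hcard i).symm ▸ one_pos) (Nat.cast_nonneg _)
  -- Equal masses and equal moments make every class's barycenter the global one.
  refine ⟨fun i => nonempty_of_sum_ne_zero (hpos i).ne', ∑ a ∈ P, w a • a, fun i => ?_⟩
  have hcenter : ∑ a ∈ P, w a • a = {a ∈ P | col a = i}.centerMass w id := by
    rw [centerMass, ← sum_fiberwise P col, ← eq_inv_of_mul_eq_one_left (hcard i)]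
    simp [hmoment _ i, Nat.cast_smul_eq_nsmul]
  rw [hcenter]
  exact centerMass_mem_convexHull _ (fun a ha => hw₀ a (mem_filter.1 ha).1) (hpos i)
    fun a ha => ha

theorem exists_tverberg_partition {E : Type*} [AddCommGroup E] [Module ℝ E]
    [FiniteDimensional ℝ E] (m : ℕ) (P : Finset E) (hP : m * (finrank ℝ E + 1) < #P) :
    ∃ col : E → Fin (m + 1), (∀ i, {a ∈ P | col a = i}.Nonempty) ∧
      ∃ x, ∀ i, x ∈ convexHull ℝ (({a ∈ P | col a = i} : Finset E) : Set E) := by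
  obtain ⟨col, w, hw₀, hw₁, hw⟩ := exists_coloring_sum_smul_sarkariaLift_eq_zero P hP
  refine ⟨col, exists_mem_convexHull_fibers_of_sum_smul_eq P col w hw₀ hw₁ ?_⟩
  refine eq_of_forall_sum_sarkariaVector_smul_eq_zero fun l => ?_
  rw [← sum_smul_sarkariaLift_apply, hw, Pi.zero_apply]

/-- Tverberg's theorem. -/
theorem tverberg_theorem (d r : ℕ) [DecidableEq (EuclideanSpace ℝ (Fin d))] (hr : 1 ≤ r)
    (P : Finset (EuclideanSpace ℝ (Fin d)))
    (hP : P.card = (r - 1) * (d + 1) + 1) :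
    ∃ f : Fin r → Finset (EuclideanSpace ℝ (Fin d)),
      (∀ i, (f i).Nonempty) ∧
      (∀ i j, i ≠ j → Disjoint (f i) (f j)) ∧
      Finset.univ.biUnion f = P ∧
      ∃ x : EuclideanSpace ℝ (Fin d),
        ∀ i, x ∈ convexHull ℝ ((f i : Set (EuclideanSpace ℝ (Fin d)))) := by
  obtain ⟨m, rfl⟩ := Nat.exists_eq_add_of_le' hr
  obtain ⟨col, hne, x, hx⟩ := exists_tverberg_partition m P (by
    rw [hP, finrank_euclideanSpace_fin, Nat.add_sub_cancel]
    exact Nat.lt_succ_self _)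
  exact ⟨fun i => {a ∈ P | col a = i}, hne,
    fun i j hij => disjoint_filter.2 fun _ _ hi hj => hij (hi ▸ hj),
    biUnion_filter_eq_of_maps_to fun _ _ => mem_univ _, x, hx⟩
end

section
/- For any set P of n points in R^d there exists a point c in R^d such that every closed halfspace containing c contains at least ⌈n/(d+1)⌉ points of P. -/
/-! By Helly's theorem there is a point `c` in the convex hull of every subset of `P` that misses
at most `m` of its points, where `(d + 1) * m < #P`: any `d + 1` such subsets miss fewer than
`#P` points in total, so they share a point of `P`. A closed halfspace containing `c` therefore
holds more than `m` points of `P`, as otherwise the points outside it would form such a subset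
whose convex hull avoids `c`. Taking `m = ⌈#P / (d + 1)⌉ - 1` gives the theorem. -/

open Finset Module

theorem Finset.exists_mem_forall_mem_of_card_sdiff_le {α : Type*} [DecidableEq α]
    {P : Finset α} {I : Finset (Finset α)} {m : ℕ} (hI : ∀ S ∈ I, #(P \ S) ≤ m)
    (hm : #I * m < #P) : ∃ p ∈ P, ∀ S ∈ I, p ∈ S := by
  have hmissed : #(I.biUnion (P \ ·)) < #P := calc
    _ ≤ ∑ S ∈ I, #(P \ S) := card_biUnion_le
    _ ≤ #I * m := sum_le_card_nsmul _ _ _ hI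
    _ < #P := hm
  obtain ⟨p, hpP, hp⟩ := not_subset.mp fun h => (card_le_card h).not_gt hmissed
  exact ⟨p, hpP, fun S hS => by_contra fun hpS =>
    hp (mem_biUnion.2 ⟨S, hS, mem_sdiff.2 ⟨hpP, hpS⟩⟩)⟩

section Centerpoint

variable {𝕜 E : Type*} [Field 𝕜] [LinearOrder 𝕜] [IsStrictOrderedRing 𝕜] [AddCommGroup E]
  [Module 𝕜 E] [FiniteDimensional 𝕜 E] {P : Finset E} {m : ℕ}

theorem exists_forall_mem_convexHull_of_card_sdiff_le [DecidableEq E]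
    (hm : (finrank 𝕜 E + 1) * m < #P) :
    ∃ c, ∀ S ⊆ P, #(P \ S) ≤ m → c ∈ convexHull 𝕜 (S : Set E) := by
  obtain ⟨c, hc⟩ := Convex.helly_theorem' (ι := Finset E)
    (s := P.powerset.filter (fun S => #(P \ S) ≤ m))
    (F := fun S => convexHull 𝕜 (S : Set E)) (fun S _ => convex_convexHull 𝕜 _)
    fun I hI hIcard => by
      obtain ⟨p, -, hp⟩ := exists_mem_forall_mem_of_card_sdiff_le
        (fun S hS => (mem_filter.1 (hI hS)).2) ((Nat.mul_le_mul_right m hIcard).trans_lt hm)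
      exact ⟨p, Set.mem_iInter₂.2 fun S hS => subset_convexHull 𝕜 _ (hp S hS)⟩
  exact ⟨c, fun S hSP hS => Set.mem_iInter₂.1 hc S (mem_filter.2 ⟨mem_powerset.2 hSP, hS⟩)⟩

theorem exists_forall_lt_card_filter_le_apply (hm : (finrank 𝕜 E + 1) * m < #P) :
    ∃ c, ∀ (f : E →ₗ[𝕜] 𝕜) (b : 𝕜), b ≤ f c → m < #(P.filter (b ≤ f ·)) := by
  classical
  obtain ⟨c, hc⟩ := exists_forall_mem_convexHull_of_card_sdiff_le hm
  refine ⟨c, fun f b hb => ?_⟩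
  by_contra! hle
  have hcompl : P \ P.filter (f · < b) = P.filter (b ≤ f ·) := by
    simp only [← filter_not, not_lt]
  have hsub : (P.filter (f · < b) : Set E) ⊆ {x | f x < b} := fun x hx => (mem_filter.1 hx).2
  have hcS := hc _ (filter_subset _ _) (hcompl ▸ hle)
  exact hb.not_gt (convexHull_min hsub (convex_halfSpace_lt f.isLinear b) hcS)

end Centerpoint

theorem Nat.mul_pred_ceil_div_lt {n q : ℕ} (hn : 0 < n) (hq : 0 < q) :
    q * (⌈(n : ℝ) / q⌉₊ - 1) < n := by
  have hceil : 1 ≤ ⌈(n : ℝ) / q⌉₊ := Nat.one_le_iff_ne_zero.2 (by positivity)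
  have hlt : (⌈(n : ℝ) / q⌉₊ : ℝ) - 1 < n / q := by
    linarith [Nat.ceil_lt_add_one (by positivity : (0 : ℝ) ≤ n / q)]
  rw [← Nat.cast_lt (α := ℝ), Nat.cast_mul, Nat.cast_sub hceil, Nat.cast_one]
  rwa [lt_div_iff₀ (by positivity), mul_comm] at hlt

/-- Centerpoint theorem: there is a point `c` such that every closed halfspace
containing `c` contains at least `⌈n/(d+1)⌉` points of `P`. -/
theorem centerpoint_theorem (d : ℕ) (P : Finset (EuclideanSpace ℝ (Fin d))) :
    ∃ c : EuclideanSpace ℝ (Fin d),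
      ∀ (a : EuclideanSpace ℝ (Fin d)) (b : ℝ), a ≠ 0 → b ≤ inner ℝ a c →
        ⌈(P.card : ℝ) / (d + 1)⌉ ≤ ((P.filter (fun p => b ≤ (inner ℝ a p : ℝ))).card : ℤ) := by
  obtain rfl | hP := P.eq_empty_or_nonempty
  · exact ⟨0, fun a b _ _ => by simp⟩
  have hm :
      (finrank ℝ (EuclideanSpace ℝ (Fin d)) + 1) * (⌈(#P : ℝ) / (d + 1)⌉₊ - 1) < #P := by
    simpa using Nat.mul_pred_ceil_div_lt hP.card_pos d.succ_pos
  obtain ⟨c, hc⟩ := exists_forall_lt_card_filter_le_apply hm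
  refine ⟨c, fun a b _ hb => ?_⟩
  have hdepth := hc (innerₛₗ ℝ a) b hb
  rw [← Int.natCast_ceil_eq_ceil (by positivity)]
  exact_mod_cast Nat.le_of_pred_lt hdepth
end

section
/- Let P be a set of n points in R^d and h a hyperplane in R^d. If there exists a point c' ∈ h of Tverberg depth r for the orthogonal projection of P onto h, then there exists a point c ∈ R^d of Tverberg depth at least ⌈r/2⌉ for P. -/
/-!
Lift each part of the Tverberg partition of the projection to its preimage in `P`. Since the
projection is affine, the convex hull of every lifted part meets the fibre `c' + ℝ a` over `c'`.
Sort the parts by the height at which they meet it and merge the `k`-th lowest with the `k`-th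
highest (for odd `r` the middle part stays alone): the point at the median height lies on the
segment between the two meeting points of every merged pair, giving `⌈r/2⌉ = (r + 1) / 2` parts.
-/

/-- `x` has Tverberg depth `r` with respect to the finite set `Q`. -/
def HasTverbergDepth {d : ℕ} (Q : Finset (EuclideanSpace ℝ (Fin d)))
    (x : EuclideanSpace ℝ (Fin d)) (r : ℕ) : Prop :=
  ∃ f : Fin r → Finset (EuclideanSpace ℝ (Fin d)),
    (∀ i, (f i).Nonempty) ∧
    (∀ i j, i ≠ j → Disjoint (f i) (f j)) ∧
    (∀ p ∈ Q, ∃ i, p ∈ f i) ∧ (∀ i, f i ⊆ Q) ∧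
    ∀ i, x ∈ convexHull ℝ ((f i : Set (EuclideanSpace ℝ (Fin d))))

open Finset

def IsIndexedPartition {α : Type*} {r : ℕ} (P : Finset α) (Q : Fin r → Finset α) : Prop :=
  (∀ i, (Q i).Nonempty) ∧ (∀ i j, i ≠ j → Disjoint (Q i) (Q j)) ∧
    (∀ p ∈ P, ∃ i, p ∈ Q i) ∧ ∀ i, Q i ⊆ P

namespace IsIndexedPartition

variable {α β : Type*} {r s : ℕ} {P : Finset α}

theorem preimage [DecidableEq β] {f : Fin r → Finset β} (g : α → β)
    (hf : IsIndexedPartition (P.image g) f) :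
    IsIndexedPartition P (fun i => P.filter (g · ∈ f i)) := by
  obtain ⟨hne, hdis, hcov, hsub⟩ := hf
  refine ⟨fun i => ?_, fun i j hij => ?_, fun p hp => ?_, fun i => filter_subset _ _⟩
  · obtain ⟨q, hq⟩ := hne i
    obtain ⟨p, hp, rfl⟩ := mem_image.mp (hsub i hq)
    exact ⟨p, mem_filter.mpr ⟨hp, hq⟩⟩
  · exact disjoint_filter_filter' _ _ fun S hSi hSj p hp =>
      disjoint_left.mp (hdis i j hij) (hSi p hp) (hSj p hp)
  · obtain ⟨i, hi⟩ := hcov (g p) (mem_image_of_mem g hp)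
    exact ⟨i, mem_filter.mpr ⟨hp, hi⟩⟩

theorem fiberUnion [DecidableEq α] {Q : Fin r → Finset α} (hQ : IsIndexedPartition P Q)
    {π : Fin r → Fin s} (hπ : Function.Surjective π) :
    IsIndexedPartition P (fun k => (univ.filter (π · = k)).biUnion Q) := by
  obtain ⟨hne, hdis, hcov, hsub⟩ := hQ
  refine ⟨fun k => ?_, fun k l hkl => ?_, fun p hp => ?_, fun k => biUnion_subset.mpr ?_⟩
  · obtain ⟨i, rfl⟩ := hπ k
    obtain ⟨p, hp⟩ := hne i
    exact ⟨p, mem_biUnion.mpr ⟨i, by simp, hp⟩⟩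
  · simp only [disjoint_biUnion_left, disjoint_biUnion_right, mem_filter, mem_univ, true_and]
    rintro i rfl j rfl
    exact hdis _ _ (ne_of_apply_ne π hkl)
  · obtain ⟨i, hi⟩ := hcov p hp
    exact ⟨π i, mem_biUnion.mpr ⟨i, by simp, hi⟩⟩
  · exact fun i _ => hsub i

end IsIndexedPartition

theorem Finset.filter_image_mem_eq {α β : Type*} [DecidableEq β] {P : Finset α} {f : Finset β}
    (g : α → β) (hf : f ⊆ P.image g) : (P.filter (g · ∈ f)).image g = f := by
  rw [← filter_image (p := (· ∈ f)), filter_mem_eq_inter, inter_eq_right.mpr hf]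

theorem exists_pairing_around_median {α : Type*} [LinearOrder α] [Nonempty α] {r : ℕ}
    (t : Fin r → α) :
    ∃ (π : Fin r → Fin ((r + 1) / 2)) (m : α),
      ∀ k, ∃ i j, π i = k ∧ π j = k ∧ t i ≤ m ∧ m ≤ t j := by
  rcases Nat.eq_zero_or_pos r with rfl | hr
  · exact ⟨finZeroElim, Classical.arbitrary α, fun k => absurd k.isLt (by simp)⟩
  set σ := Tuple.sort t
  have hσ := Tuple.monotone_sort t
  let fold : Fin r → Fin ((r + 1) / 2) := fun j => ⟨min j (r - 1 - j), by omega⟩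
  refine ⟨fun i => fold (σ.symm i), t (σ ⟨(r - 1) / 2, by omega⟩), fun k =>
    ⟨σ ⟨k, by omega⟩, σ ⟨r - 1 - k, by omega⟩, ?_, ?_, hσ ?_, hσ ?_⟩⟩
  all_goals simp only [Equiv.symm_apply_apply, fold, Fin.ext_iff, Fin.le_def]
  all_goals omega

theorem add_smul_mem_segment {E : Type*} [AddCommGroup E] [Module ℝ E] (x v : E) {s m u : ℝ}
    (hsm : s ≤ m) (hmu : m ≤ u) : x + m • v ∈ segment ℝ (x + s • v) (x + u • v) := by
  have h : ∀ t : ℝ, AffineMap.lineMap x (x + v) t = x + t • v := fun t => by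
    simp [AffineMap.lineMap_apply_module', add_comm]
  rw [← h m, ← h s, ← h u, ← image_segment, segment_eq_Icc (hsm.trans hmu)]
  exact Set.mem_image_of_mem _ ⟨hsm, hmu⟩

theorem exists_affineMap_eq_sub_smul {E : Type*} [NormedAddCommGroup E] [InnerProductSpace ℝ E]
    (a : E) (b : ℝ) :
    ∃ g : E →ᵃ[ℝ] E, ∀ x, g x = x - (((inner ℝ a x : ℝ) - b) / ‖a‖ ^ 2) • a :=
  ⟨AffineMap.id ℝ E - (AffineMap.lineMap 0 a).comp
      ((‖a‖ ^ 2)⁻¹ • ((innerₛₗ ℝ a).toAffineMap - AffineMap.const ℝ E b)),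
    fun x => by simp [AffineMap.lineMap_apply_module', div_eq_inv_mul]⟩

section Tverberg

variable {d r s : ℕ}

local notation "E" => EuclideanSpace ℝ (Fin d)

theorem hasTverbergDepth_iff_exists_partition {Q : Finset E} {x : E} :
    HasTverbergDepth Q x r ↔
      ∃ f : Fin r → Finset E,
        IsIndexedPartition Q f ∧ ∀ i, x ∈ convexHull ℝ (f i : Set E) := by
  simp only [HasTverbergDepth, IsIndexedPartition, and_assoc]

theorem hasTverbergDepth_of_mem_segment [DecidableEq E] {P : Finset E} {Q : Fin r → Finset E}
    (hQ : IsIndexedPartition P Q) {x : Fin r → E}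
    (hx : ∀ i, x i ∈ convexHull ℝ (Q i : Set E))
    (π : Fin r → Fin s) (c : E)
    (hπ : ∀ k, ∃ i j, π i = k ∧ π j = k ∧ c ∈ segment ℝ (x i) (x j)) :
    HasTverbergDepth P c s := by
  have hsurj : Function.Surjective π := fun k =>
    let ⟨i, _, hi, _⟩ := hπ k
    ⟨i, hi⟩
  refine hasTverbergDepth_iff_exists_partition.mpr ⟨_, hQ.fiberUnion hsurj, fun k => ?_⟩
  obtain ⟨i, j, hi, hj, hc⟩ := hπ k
  have hx' : ∀ l, π l = k → x l ∈ convexHull ℝ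
      (((univ.filter (π · = k)).biUnion Q : Finset E) : Set E) := fun l hl =>
    convexHull_mono (coe_subset.mpr (subset_biUnion_of_mem Q (by simpa using hl))) (hx l)
  exact (convex_convexHull ℝ _).segment_subset (hx' i hi) (hx' j hj) hc

end Tverberg

theorem lifting_lemma_general (d r : ℕ) [DecidableEq (EuclideanSpace ℝ (Fin d))]
    (a : EuclideanSpace ℝ (Fin d)) (b : ℝ)
    (pr : EuclideanSpace ℝ (Fin d) → EuclideanSpace ℝ (Fin d))
    (hpr : ∀ x, pr x = x - (((inner ℝ a x : ℝ) - b) / ‖a‖ ^ 2) • a)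
    (P : Finset (EuclideanSpace ℝ (Fin d)))
    (c' : EuclideanSpace ℝ (Fin d))
    (hdepth : HasTverbergDepth (P.image pr) c' r) :
    ∃ c : EuclideanSpace ℝ (Fin d), HasTverbergDepth P c ((r + 1) / 2) := by
  obtain ⟨g, hg⟩ := exists_affineMap_eq_sub_smul a b
  obtain rfl : ⇑g = pr := funext fun x => (hg x).trans (hpr x).symm
  obtain ⟨f, hf, hc'⟩ := hasTverbergDepth_iff_exists_partition.mp hdepth
  let Q i := P.filter (g · ∈ f i)
  have lift : ∀ i, ∃ t : ℝ, c' + t • a ∈ convexHull ℝ (Q i : Set _) := by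
    intro i
    obtain ⟨x, hx, rfl⟩ : c' ∈ g '' convexHull ℝ (Q i : Set _) := by
      rw [AffineMap.image_convexHull, ← coe_image, filter_image_mem_eq g (hf.2.2.2 i)]
      exact hc' i
    exact ⟨_, by rwa [← sub_eq_iff_eq_add.mp (hg x).symm]⟩
  choose t ht using lift
  obtain ⟨π, m, hπ⟩ := exists_pairing_around_median t
  refine ⟨c' + m • a, hasTverbergDepth_of_mem_segment (hf.preimage g) ht π _ fun k => ?_⟩
  obtain ⟨i, j, hi, hj, hti, htj⟩ := hπ k
  exact ⟨i, j, hi, hj, add_smul_mem_segment c' a hti htj⟩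

/-- Lifting lemma: a Tverberg point of depth `r` for the projection of `P` onto a
hyperplane yields a Tverberg point of depth `⌈r/2⌉` for `P`. -/
theorem lifting_lemma (d r : ℕ) [DecidableEq (EuclideanSpace ℝ (Fin d))]
    (a : EuclideanSpace ℝ (Fin d)) (b : ℝ) (ha : a ≠ 0)
    (pr : EuclideanSpace ℝ (Fin d) → EuclideanSpace ℝ (Fin d))
    (hpr : ∀ x, pr x = x - (((inner ℝ a x : ℝ) - b) / ‖a‖ ^ 2) • a)
    (P : Finset (EuclideanSpace ℝ (Fin d)))
    (c' : EuclideanSpace ℝ (Fin d)) (hc' : (inner ℝ a c' : ℝ) = b)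
    (hdepth : HasTverbergDepth (P.image pr) c' r) :
    ∃ c : EuclideanSpace ℝ (Fin d), HasTverbergDepth P c ((r + 1) / 2) :=
  lifting_lemma_general d r a b pr hpr P c' hdepth
end

section
/- Any set P of n points in R^d can be partitioned into ⌈n/2^d⌉ sets P_1, ..., P_{⌈n/2^d⌉} such that the intersection of the convex hulls ch(P_i) is nonempty. -/
/-!
Sort the points by their first coordinate and pair the `i`-th smallest with the `(i + m)`-th,
where `m = ⌈n/2⌉`. Every pair straddles the median value `t`, so its segment meets the
hyperplane `x₀ = t` in a point. By induction these `m` points in a copy of `ℝ^(d-1)` split into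
`⌈m/2^(d-1)⌉ = ⌈n/2^d⌉` classes with a common point in their convex hulls, and replacing each
crossing point by the pair it came from gives the required partition of the original points.
-/

open Finset Function

/-- The classes of the partition are the fibres `c ⁻¹' {j}`; surjectivity of `c` makes them
nonempty. -/
def HasTverbergPartition {ι E : Type*} [AddCommGroup E] [Module ℝ E] (p : ι → E) (r : ℕ) :
    Prop :=
  ∃ c : ι → Fin r, Surjective c ∧ ∃ x, ∀ j, x ∈ convexHull ℝ (p '' (c ⁻¹' {j}))

namespace HasTverbergPartition

variable {ι κ E F : Type*} [AddCommGroup E] [Module ℝ E] [AddCommGroup F] [Module ℝ F]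
  {p : ι → E} {r : ℕ}

theorem lift {z : κ → E} (h : HasTverbergPartition z r) (g : ι → κ) (hg : Surjective g)
    (hz : ∀ k, z k ∈ convexHull ℝ (p '' (g ⁻¹' {k}))) : HasTverbergPartition p r := by
  obtain ⟨c, hc, x, hx⟩ := h
  refine ⟨c ∘ g, hc.comp hg, x, fun j => convexHull_min ?_ (convex_convexHull ℝ _) (hx j)⟩
  rintro _ ⟨k, hk, rfl⟩
  refine convexHull_mono (Set.image_mono fun i hi => ?_) (hz k)
  simp_all

theorem map (h : HasTverbergPartition p r) (A : E →ᵃ[ℝ] F) :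
    HasTverbergPartition (A ∘ p) r := by
  obtain ⟨c, hc, x, hx⟩ := h
  refine ⟨c, hc, A x, fun j => ?_⟩
  rw [Set.image_comp, ← AffineMap.image_convexHull]
  exact Set.mem_image_of_mem A (hx j)

end HasTverbergPartition

theorem hasTverbergPartition_of_subsingleton {E : Type*} [AddCommGroup E] [Module ℝ E]
    [Subsingleton E] {n : ℕ} (p : Fin n → E) : HasTverbergPartition p n :=
  ⟨id, surjective_id, 0, fun j => Subsingleton.elim (p j) 0 ▸ subset_convexHull ℝ _ ⟨j, rfl, rfl⟩⟩

theorem Nat.ceilDiv_ceilDiv (n : ℕ) {a b : ℕ} (ha : 0 < a) (hb : 0 < b) :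
    n ⌈/⌉ a ⌈/⌉ b = n ⌈/⌉ (a * b) :=
  eq_of_forall_ge_iff fun c => by
    rw [ceilDiv_le_iff_le_mul hb, ceilDiv_le_iff_le_mul ha, ceilDiv_le_iff_le_mul (mul_pos ha hb),
      mul_assoc]

theorem exists_mem_segment_apply_eq {E : Type*} [AddCommGroup E] [Module ℝ E]
    (ℓ : E →ᵃ[ℝ] ℝ) {a b : E} {t : ℝ} (ha : ℓ a ≤ t) (hb : t ≤ ℓ b) :
    ∃ z ∈ segment ℝ a b, ℓ z = t := by
  have : t ∈ ℓ '' segment ℝ a b := by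
    rw [image_segment, segment_eq_Icc (ha.trans hb)]
    exact ⟨ha, hb⟩
  exact this

/-- The fibre of `k` consists of the `k`-th and, if it exists, the `(k + m)`-th smallest value
of `h`, where `m = ⌈n/2⌉`; the median `t` lies between them. -/
theorem exists_surjective_fibers_straddle {n : ℕ} (h : Fin n → ℝ) :
    ∃ (g : Fin n → Fin (n ⌈/⌉ 2)) (t : ℝ), Surjective g ∧
      ∀ k, ∃ a b, g a = k ∧ g b = k ∧ h a ≤ t ∧ t ≤ h b := by
  obtain rfl | hn := n.eq_zero_or_pos
  · exact ⟨Fin.elim0, 0, fun k => k.elim0, fun k => k.elim0⟩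
  set m := n ⌈/⌉ 2
  have hm : m = (n + 1) / 2 := rfl
  have hmono : Monotone (h ∘ Tuple.sort h) := Tuple.monotone_sort h
  set σ := Tuple.sort h
  refine ⟨fun i => ⟨σ.symm i % m, Nat.mod_lt _ (by omega)⟩, h (σ ⟨m - 1, by omega⟩),
    fun k => ⟨σ ⟨k, by omega⟩, Fin.ext (by simp [Nat.mod_eq_of_lt k.isLt])⟩, fun k => ?_⟩
  have hk := k.isLt
  obtain ⟨j, hjn, hjm, hj⟩ : ∃ j, j < n ∧ j % m = k ∧ m - 1 ≤ j := by
    by_cases hkm : k + m < n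
    · exact ⟨k + m, hkm, by simp [Nat.mod_eq_of_lt hk], by omega⟩
    · exact ⟨k, by omega, Nat.mod_eq_of_lt hk, by omega⟩
  refine ⟨σ ⟨k, by omega⟩, σ ⟨j, hjn⟩, Fin.ext ?_, Fin.ext ?_,
    hmono (Fin.mk_le_mk.2 (by omega)), hmono (Fin.mk_le_mk.2 hj)⟩
  · simp [Nat.mod_eq_of_lt hk]
  · simpa using hjm

def Fin.consAffineMap {k : Type*} [Ring k] {d : ℕ} (t : k) :
    (Fin d → k) →ᵃ[k] (Fin (d + 1) → k) :=
  AffineMap.pi (Fin.cons (AffineMap.const k _ t) fun j => (LinearMap.proj j).toAffineMap)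

@[simp]
theorem Fin.consAffineMap_apply {k : Type*} [Ring k] {d : ℕ} (t : k) (v : Fin d → k) :
    Fin.consAffineMap t v = Fin.cons t v := by
  ext i
  cases i using Fin.cases <;> simp [Fin.consAffineMap, AffineMap.pi_apply]

theorem hasTverbergPartition_ceilDiv_two_pow (d : ℕ) :
    ∀ {n : ℕ} (p : Fin n → Fin d → ℝ), HasTverbergPartition p (n ⌈/⌉ 2 ^ d) := by
  induction d with
  | zero => intro n p; simpa using hasTverbergPartition_of_subsingleton p
  | succ d ih =>
    intro n p
    obtain ⟨g, t, hg, hfib⟩ := exists_surjective_fibers_straddle fun i => p i 0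
    have hcross : ∀ k, ∃ z ∈ convexHull ℝ (p '' (g ⁻¹' {k})), z 0 = t := by
      intro k
      obtain ⟨a, b, ha, hb, hat, htb⟩ := hfib k
      obtain ⟨z, hz, hzt⟩ := exists_mem_segment_apply_eq
        (LinearMap.proj (R := ℝ) (φ := fun _ => ℝ) 0).toAffineMap hat htb
      exact ⟨z, segment_subset_convexHull (Set.mem_image_of_mem p ha)
        (Set.mem_image_of_mem p hb) hz, hzt⟩
    choose z hz hzt using hcross
    have hcons : Fin.consAffineMap t ∘ (fun k => Fin.tail (z k)) = z :=
      funext fun k => by simp [← hzt k]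
    have := (ih fun k => Fin.tail (z k)).map (Fin.consAffineMap t)
    rw [hcons, Nat.ceilDiv_ceilDiv _ two_pos (by positivity), ← pow_succ'] at this
    exact this.lift g hg hz

theorem hasTverbergPartition_finset {d : ℕ} (P : Finset (EuclideanSpace ℝ (Fin d))) :
    HasTverbergPartition (fun q : P => (q : EuclideanSpace ℝ (Fin d))) (P.card ⌈/⌉ 2 ^ d) := by
  have := (hasTverbergPartition_ceilDiv_two_pow d fun k => WithLp.ofLp (P.equivFin.symm k).1).map
    (WithLp.linearEquiv 2 ℝ (Fin d → ℝ)).symm.toLinearMap.toAffineMap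
  refine this.lift P.equivFin P.equivFin.surjective fun k => subset_convexHull ℝ _ ?_
  exact ⟨P.equivFin.symm k, by simp, by simp⟩

/-- Weak Tverberg theorem: any set of `n` points in `ℝ^d` can be partitioned into
`⌈n/2^d⌉` sets whose convex hulls have a common point. -/
theorem weak_tverberg_theorem (d : ℕ) (P : Finset (EuclideanSpace ℝ (Fin d))) :
    ∃ f : Fin ((P.card + 2 ^ d - 1) / 2 ^ d) → Finset (EuclideanSpace ℝ (Fin d)),
      (∀ i, (f i).Nonempty) ∧
      (∀ i j, i ≠ j → Disjoint (f i) (f j)) ∧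
      (∀ p ∈ P, ∃ i, p ∈ f i) ∧ (∀ i, f i ⊆ P) ∧
      ∃ x : EuclideanSpace ℝ (Fin d),
        ∀ i, x ∈ convexHull ℝ ((f i : Set (EuclideanSpace ℝ (Fin d)))) := by
  classical
  obtain ⟨c, hc, x, hx⟩ := hasTverbergPartition_finset P
  refine ⟨fun j => (univ.filter (c · = j)).map (.subtype _), fun j => ?_, fun i j hij => ?_,
    fun q hq => ⟨c ⟨q, hq⟩, by simp [hq]⟩,
    fun j => map_subset_iff_subset_preimage.2 fun q _ => by simp, x, fun j => ?_⟩
  · obtain ⟨q, rfl⟩ := hc j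
    exact ⟨q, by simp⟩
  · simp only [Finset.disjoint_left, mem_map, mem_filter, mem_univ, true_and,
      Embedding.coe_subtype]
    rintro _ ⟨q, hq, rfl⟩ ⟨q', hq', hqq'⟩
    obtain rfl := Subtype.ext hqq'
    exact hij (hq.symm.trans hq')
  · convert hx j
    ext
    simp
end

section
/- Let P ⊆ R^d be partitioned into sets P_1, ..., P_α. Suppose for each i there is a point c_i of Tverberg depth r for P_i, witnessed by a partition 𝒫_i = {Q_{i1}, ..., Q_{ir}} of P_i. Let C = {c_1, ..., c_α} and suppose c is a point of Tverberg depth r' for C, witnessed by a partition 𝒞 = {D_1, ..., D_{r'}} of C. Then c has Tverberg depth r·r' with respect to P, witnessed by the partition consisting of the sets Z_{ab} = ⋃_{c_i ∈ D_a} Q_{ib} for a = 1,...,r' and b = 1,...,r. -/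
/-- Combination lemma: combining Tverberg partitions of depth `r` for the parts
`P i` with a Tverberg partition of depth `r'` for the set of their Tverberg points
yields a Tverberg partition of depth `r·r'` for `P`, given by the sets
`Z (a,b) = ⋃_{c i ∈ D a} Q i b`. -/
theorem combination_lemma (d α r r' : ℕ) [DecidableEq (EuclideanSpace ℝ (Fin d))]
    (P : Finset (EuclideanSpace ℝ (Fin d)))
    (Pi : Fin α → Finset (EuclideanSpace ℝ (Fin d)))
    -- `P 1, ..., P α` partition `P`
    (hPdisj : ∀ i j, i ≠ j → Disjoint (Pi i) (Pi j))
    (hPcover : Finset.univ.biUnion Pi = P)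
    -- for each `i`, the sets `Q i 1, ..., Q i r` partition `P i`
    (Q : Fin α → Fin r → Finset (EuclideanSpace ℝ (Fin d)))
    (hQne : ∀ i b, (Q i b).Nonempty)
    (hQdisj : ∀ i, ∀ b b', b ≠ b' → Disjoint (Q i b) (Q i b'))
    (hQcover : ∀ i, Finset.univ.biUnion (Q i) = Pi i)
    -- `c i` is a Tverberg point of depth `r` for `P i`, witnessed by the `Q i b`
    (c : Fin α → EuclideanSpace ℝ (Fin d))
    (hci : ∀ i b, c i ∈ convexHull ℝ ((Q i b : Set (EuclideanSpace ℝ (Fin d)))))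
    (hcinj : Function.Injective c)
    -- the sets `D 1, ..., D r'` partition `C = {c 1, ..., c α}`
    (D : Fin r' → Finset (EuclideanSpace ℝ (Fin d)))
    (hDne : ∀ a, (D a).Nonempty)
    (hDdisj : ∀ a a', a ≠ a' → Disjoint (D a) (D a'))
    (hDcover : Finset.univ.biUnion D = Finset.univ.image c)
    -- `c₀` is a Tverberg point of depth `r'` for `C`, witnessed by the `D a`
    (c₀ : EuclideanSpace ℝ (Fin d))
    (hc₀ : ∀ a, c₀ ∈ convexHull ℝ ((D a : Set (EuclideanSpace ℝ (Fin d))))) :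
    ∀ Z : Fin r' × Fin r → Finset (EuclideanSpace ℝ (Fin d)),
      (∀ ab, Z ab = (Finset.univ.filter (fun i => c i ∈ D ab.1)).biUnion
        (fun i => Q i ab.2)) →
      (∀ ab, (Z ab).Nonempty) ∧
      (∀ ab ab', ab ≠ ab' → Disjoint (Z ab) (Z ab')) ∧
      Finset.univ.biUnion Z = P ∧
      ∀ ab, c₀ ∈ convexHull ℝ ((Z ab : Set (EuclideanSpace ℝ (Fin d)))) := by
  intro Z hZ
  -- every element of D a is some c i with c i ∈ D a
  have hDsub : ∀ a, ∀ x ∈ D a, ∃ i : Fin α, c i = x ∧ c i ∈ D a := by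
    intro a x hx
    have : x ∈ Finset.univ.image c := by
      rw [← hDcover]; exact Finset.mem_biUnion.2 ⟨a, Finset.mem_univ a, hx⟩
    obtain ⟨i, -, hi⟩ := Finset.mem_image.1 this
    exact ⟨i, hi, hi ▸ hx⟩
  have hQP : ∀ i b, Q i b ⊆ Pi i := by
    intro i b
    rw [← hQcover i]
    exact Finset.subset_biUnion_of_mem _ (Finset.mem_univ b)
  refine ⟨?_, ?_, ?_, ?_⟩
  · -- nonempty
    intro ab
    obtain ⟨x, hx⟩ := hDne ab.1
    obtain ⟨i, -, hi⟩ := hDsub ab.1 x hx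
    obtain ⟨y, hy⟩ := hQne i ab.2
    rw [hZ ab]
    exact ⟨y, Finset.mem_biUnion.2 ⟨i, Finset.mem_filter.2 ⟨Finset.mem_univ i, hi⟩, hy⟩⟩
  · -- disjoint
    intro ab ab' hne
    rw [hZ ab, hZ ab']
    rw [Finset.disjoint_left]
    intro x hx hx'
    obtain ⟨i, hi, hxi⟩ := Finset.mem_biUnion.1 hx
    obtain ⟨j, hj, hxj⟩ := Finset.mem_biUnion.1 hx'
    have hi' := (Finset.mem_filter.1 hi).2
    have hj' := (Finset.mem_filter.1 hj).2
    by_cases hij : i = j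
    · subst hij
      have ha : ab.1 = ab'.1 := by
        by_contra h
        exact (Finset.disjoint_left.1 (hDdisj _ _ h)) hi' hj'
      have hb : ab.2 ≠ ab'.2 := fun h => hne (Prod.ext ha h)
      exact (Finset.disjoint_left.1 (hQdisj i _ _ hb)) hxi hxj
    · exact (Finset.disjoint_left.1 (hPdisj i j hij)) (hQP i ab.2 hxi) (hQP j ab'.2 hxj)
  · -- cover
    rw [← hPcover]
    apply Finset.Subset.antisymm
    · intro x hx
      obtain ⟨ab, -, hxab⟩ := Finset.mem_biUnion.1 hx
      rw [hZ ab] at hxab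
      obtain ⟨i, -, hxi⟩ := Finset.mem_biUnion.1 hxab
      exact Finset.mem_biUnion.2 ⟨i, Finset.mem_univ i, hQP i ab.2 hxi⟩
    · intro x hx
      obtain ⟨i, -, hxi⟩ := Finset.mem_biUnion.1 hx
      rw [← hQcover i] at hxi
      obtain ⟨b, -, hxb⟩ := Finset.mem_biUnion.1 hxi
      have : c i ∈ Finset.univ.image c := Finset.mem_image_of_mem c (Finset.mem_univ i)
      rw [← hDcover] at this
      obtain ⟨a, -, ha⟩ := Finset.mem_biUnion.1 this
      refine Finset.mem_biUnion.2 ⟨(a, b), Finset.mem_univ _, ?_⟩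
      rw [hZ (a, b)]
      exact Finset.mem_biUnion.2 ⟨i, Finset.mem_filter.2 ⟨Finset.mem_univ i, ha⟩, hxb⟩
  · -- convex hull
    intro ab
    have hsub : (D ab.1 : Set (EuclideanSpace ℝ (Fin d))) ⊆
        convexHull ℝ ((Z ab : Set (EuclideanSpace ℝ (Fin d)))) := by
      intro x hx
      obtain ⟨i, hix, hiD⟩ := hDsub ab.1 x hx
      have hQZ : (Q i ab.2 : Set (EuclideanSpace ℝ (Fin d))) ⊆ (Z ab : Set _) := by
        rw [hZ ab]
        intro y hy
        exact Finset.mem_biUnion.2 ⟨i, Finset.mem_filter.2 ⟨Finset.mem_univ i, hiD⟩, hy⟩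
      exact hix ▸ convexHull_mono hQZ (hci i ab.2)
    exact convexHull_min hsub (convex_convexHull ℝ _) (hc₀ ab.1)
end

section
/- Let P be a finite set of points in R^d, h ⊆ R^d a k-flat, and pr the orthogonal projection onto h. Suppose c ∈ h is a Tverberg point of depth r for pr(P) with corresponding partition pr(P_1), ..., pr(P_r) (where P_1, ..., P_r partition P). Let h⊥_c be the (d−k)-flat through c orthogonal to h. Then ch(P_i) ∩ h⊥_c ≠ ∅ for every i = 1, ..., r; that is, h⊥_c is a Tverberg (d−k)-flat of depth r for P with the same partition. -/
/-! The projection onto the flat `c + V` is an affine map, and the image of a convex hull under an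
affine map is the convex hull of the image. So `c`, lying in the convex hull of the projected part,
is the projection of a point `x` of the convex hull of the part itself; and the points projecting
to `c` are exactly those of the orthogonal flat `c + Vᗮ`. -/

namespace Submodule

variable {E : Type*} [NormedAddCommGroup E] [InnerProductSpace ℝ E]
  (K : Submodule ℝ E) [K.HasOrthogonalProjection]

noncomputable def affineStarProjection (c : E) : E →ᵃ[ℝ] E :=
  AffineMap.mk' (fun x ↦ c + K.starProjection (x - c)) K.starProjection.toLinearMap c
    fun x ↦ by simp [add_comm]

theorem affineStarProjection_apply (c x : E) :
    K.affineStarProjection c x = c + K.starProjection (x - c) :=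
  rfl

theorem affineStarProjection_eq_self_iff {c x : E} :
    K.affineStarProjection c x = c ↔ x - c ∈ Kᗮ := by
  rw [affineStarProjection_apply, add_eq_left, starProjection_apply_eq_zero_iff]

theorem exists_mem_convexHull_sub_mem_orthogonal {s : Set E} {c : E}
    (hc : c ∈ convexHull ℝ (K.affineStarProjection c '' s)) :
    ∃ x ∈ convexHull ℝ s, x - c ∈ Kᗮ := by
  rw [← AffineMap.image_convexHull] at hc
  obtain ⟨x, hx, hxc⟩ := hc
  exact ⟨x, hx, K.affineStarProjection_eq_self_iff.mp hxc⟩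

end Submodule

theorem generalized_lifting_lemma_general (d r : ℕ)
    (V : Submodule ℝ (EuclideanSpace ℝ (Fin d)))
    (c : EuclideanSpace ℝ (Fin d))
    (pr : EuclideanSpace ℝ (Fin d) → EuclideanSpace ℝ (Fin d))
    (hpr : ∀ x, pr x = c + (V.orthogonalProjectionOnto (x - c) : EuclideanSpace ℝ (Fin d)))
    (Pi : Fin r → Finset (EuclideanSpace ℝ (Fin d)))
    (hc : ∀ i, c ∈ convexHull ℝ (pr '' (Pi i : Set (EuclideanSpace ℝ (Fin d))))) :
    ∀ i, ∃ x ∈ convexHull ℝ ((Pi i : Set (EuclideanSpace ℝ (Fin d)))),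
      x - c ∈ Vᗮ := by
  have hpr_affine : pr = V.affineStarProjection c := funext hpr
  exact fun i ↦ V.exists_mem_convexHull_sub_mem_orthogonal (hpr_affine ▸ hc i)

/-- Generalized lifting lemma: if `c` is a Tverberg point of depth `r` for the
orthogonal projection of `P` onto the `k`-flat `h = c + V`, witnessed by the
projections of the parts `P i`, then the `(d-k)`-flat `c + Vᗮ` through `c`
orthogonal to `h` meets the convex hull of every part `P i`. -/
theorem generalized_lifting_lemma (d k r : ℕ)
    (V : Submodule ℝ (EuclideanSpace ℝ (Fin d))) (hV : Module.finrank ℝ V = k)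
    (c : EuclideanSpace ℝ (Fin d))
    (pr : EuclideanSpace ℝ (Fin d) → EuclideanSpace ℝ (Fin d))
    (hpr : ∀ x, pr x = c + (V.orthogonalProjectionOnto (x - c) : EuclideanSpace ℝ (Fin d)))
    (P : Finset (EuclideanSpace ℝ (Fin d)))
    (Pi : Fin r → Finset (EuclideanSpace ℝ (Fin d)))
    (hne : ∀ i, (Pi i).Nonempty)
    (hdisj : ∀ i j, i ≠ j → Disjoint (Pi i) (Pi j))
    (hcover : ∀ p ∈ P, ∃ i, p ∈ Pi i) (hsub : ∀ i, Pi i ⊆ P)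
    (hc : ∀ i, c ∈ convexHull ℝ (pr '' (Pi i : Set (EuclideanSpace ℝ (Fin d))))) :
    ∀ i, ∃ x ∈ convexHull ℝ ((Pi i : Set (EuclideanSpace ℝ (Fin d)))),
      x - c ∈ Vᗮ :=
  generalized_lifting_lemma_general d r V c pr hpr Pi hc
end
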